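/- arXiv:1808.01418 — 6 statements merged into one kernel-verified Lean document; each statement's English description precedes it below -/
import Mathlib

section
/- (Theorem 1(iii)) Let L be an N×N real symmetric positive semidefinite matrix whose kernel is spanned by the all-ones vector 1⃗, with eigenvalues 0 = λ₁ < λ₂ ≤ … ≤ λ_N. Suppose the gain sequence satisfies ε(k) > 0 for all k and lim_{k→∞} ε(k) = 0, and suppose the system cannot reach average consensus in finite time, i.e., for every T there exists i ∈ {2, …, N} with ∏_{k=0}^{T−1}(1 − ε(k)λᵢ) ≠ 0. Then average consensus is reached asymptotically (∏_{k=0}^{T−1}(I − ε(k)L) → (1/N)·1⃗1⃗ᵀ as T → ∞) if and only if Σ_{k=0}^{∞} ε(k) = ∞. -/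
/-!
Expanding in the orthonormal eigenbasis, `∏ₖ (I - ε(k) L) = ∑ᵢ cᵢ(T) vᵢ vᵢᵀ` with
`cᵢ(T) = ∏_{k<T} (1 - ε(k) λᵢ)`, and matrix convergence is convergence of every coefficient.
`c₁ ≡ 1` gives the limit `(1/N) 1 1ᵀ`, so consensus means `cᵢ(T) → 0` for `i ≥ 2`.
If `∑ ε = ∞` this follows from `1 - x ≤ e^{-x}` once `ε(k) λᵢ ≤ 1`. If `∑ ε < ∞`, the
infinite product `∏ (1 - ε(k) λᵢ)` converges to a nonzero limit for any `i` none of whose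
factors vanishes, and the no-finite-time-consensus hypothesis provides such an `i`.
-/

open Matrix Finset Filter

/-- The product `∏_{k=0}^{T-1} (I - ε(k) L)`, built recursively as
`P 0 = I`, `P (T+1) = (I - ε(T) L) * P T`. -/
noncomputable def consProd {N : ℕ} (L : Matrix (Fin N) (Fin N) ℝ) (ε : ℕ → ℝ) :
    ℕ → Matrix (Fin N) (Fin N) ℝ
  | 0 => 1
  | T + 1 => (1 - ε T • L) * consProd L ε T

open Topology

theorem tendsto_prod_range_one_sub_of_le_one {a : ℕ → ℝ} (ha : ∀ k, a k ≤ 1)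
    (hsum : Tendsto (fun n => ∑ k ∈ range n, a k) atTop atTop) :
    Tendsto (fun n => ∏ k ∈ range n, (1 - a k)) atTop (𝓝 0) := by
  refine squeeze_zero (fun n => prod_nonneg fun k _ => sub_nonneg.2 (ha k)) (fun n => ?_)
    (Real.tendsto_exp_atBot.comp (tendsto_neg_atTop_atBot.comp hsum))
  calc ∏ k ∈ range n, (1 - a k)
      ≤ ∏ k ∈ range n, Real.exp (-a k) :=
        prod_le_prod (fun k _ => sub_nonneg.2 (ha k)) fun k _ => Real.one_sub_le_exp_neg _
    _ = Real.exp (-∑ k ∈ range n, a k) := by rw [← Real.exp_sum, sum_neg_distrib]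

theorem tendsto_prod_range_one_sub_of_eventually_le_one {a : ℕ → ℝ}
    (ha : ∀ᶠ k in atTop, a k ≤ 1) (hsum : Tendsto (fun n => ∑ k ∈ range n, a k) atTop atTop) :
    Tendsto (fun n => ∏ k ∈ range n, (1 - a k)) atTop (𝓝 0) := by
  obtain ⟨K, hK⟩ := eventually_atTop.1 ha
  have htail : Tendsto (fun n => ∑ k ∈ range n, a (K + k)) atTop atTop := by
    have := (tendsto_atTop_add_const_right _ (-∑ k ∈ range K, a k)
      ((tendsto_add_atTop_iff_nat K).2 hsum))
    refine this.congr fun n => ?_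
    rw [add_comm n K, sum_range_add]
    ring
  rw [← tendsto_add_atTop_iff_nat K]
  simp_rw [add_comm _ K, prod_range_add]
  simpa using (tendsto_prod_range_one_sub_of_le_one (fun k => hK _ (Nat.le_add_right K k))
    htail).const_mul (∏ k ∈ range K, (1 - a k))

theorem not_tendsto_prod_range_one_sub_zero {a : ℕ → ℝ} (ha : Summable a)
    (hne : ∀ k, 1 - a k ≠ 0) :
    ¬ Tendsto (fun n => ∏ k ∈ range n, (1 - a k)) atTop (𝓝 0) := by
  simp_rw [sub_eq_add_neg] at hne ⊢
  have hnorm : Summable fun k => ‖-a k‖ := by simpa using ha.abs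
  intro h
  exact tprod_one_add_ne_zero_of_summable hne hnorm <| tendsto_nhds_unique
    (multipliable_one_add_of_summable hnorm).tendsto_prod_tprod_nat h

section Orthonormal

variable {n R : Type*} [Fintype n] [CommRing R]

theorem sum_vecMulVec_self_eq_one [DecidableEq n] {v : n → n → R}
    (horth : ∀ i j, v i ⬝ᵥ v j = if i = j then 1 else 0) :
    ∑ i, vecMulVec (v i) (v i) = 1 := by
  have hrows : of v * (of v)ᵀ = 1 := by
    ext i j
    simpa [mul_apply, dotProduct, one_apply] using horth i j
  have hcols : (of v)ᵀ * of v = 1 := mul_eq_one_comm.1 hrows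
  ext a b
  simpa [Matrix.sum_apply, vecMulVec_apply, mul_apply] using congr($hcols a b)

variable {ι : Type*} [Fintype ι] [DecidableEq ι]

theorem dotProduct_sum_smul_vecMulVec_mulVec {v : ι → n → R}
    (horth : ∀ i j, v i ⬝ᵥ v j = if i = j then 1 else 0) (w : ι → R) (i : ι) :
    v i ⬝ᵥ (∑ j, w j • vecMulVec (v j) (v j)) *ᵥ v i = w i := by
  simp [sum_mulVec, smul_mulVec, vecMulVec_mulVec, horth]

theorem tendsto_sum_smul_vecMulVec_iff [TopologicalSpace R] [IsTopologicalRing R]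
    {v : ι → n → R} (horth : ∀ i j, v i ⬝ᵥ v j = if i = j then 1 else 0)
    {α : Type*} {l : Filter α} {w : α → ι → R} {a : ι → R} :
    Tendsto (fun t => ∑ i, w t i • vecMulVec (v i) (v i)) l
        (𝓝 (∑ i, a i • vecMulVec (v i) (v i))) ↔
      ∀ i, Tendsto (fun t => w t i) l (𝓝 (a i)) := by
  refine ⟨fun h i => ?_, fun h => tendsto_finsetSum _ fun i _ => (h i).smul_const _⟩
  have hcont : Continuous fun M : Matrix n n R => v i ⬝ᵥ M *ᵥ v i := by fun_prop
  have := (hcont.tendsto _).comp h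
  simpa only [Function.comp_def, dotProduct_sum_smul_vecMulVec_mulVec horth] using this

end Orthonormal

theorem consProd_eq_sum_smul_vecMulVec {N : ℕ} {L : Matrix (Fin N) (Fin N) ℝ}
    {lam : Fin N → ℝ} {v : Fin N → Fin N → ℝ} (heig : ∀ i, L *ᵥ v i = lam i • v i)
    (horth : ∀ i j, v i ⬝ᵥ v j = if i = j then 1 else 0) (ε : ℕ → ℝ) (T : ℕ) :
    consProd L ε T =
      ∑ i, (∏ k ∈ range T, (1 - ε k * lam i)) • vecMulVec (v i) (v i) := by
  induction T with
  | zero => simp [consProd, sum_vecMulVec_self_eq_one horth]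
  | succ T ih =>
    rw [consProd, ih, Finset.mul_sum]
    refine sum_congr rfl fun i _ => ?_
    rw [Matrix.mul_smul, sub_mul, one_mul, smul_mul, mul_vecMulVec, heig, smul_vecMulVec,
      prod_range_succ]
    module

theorem exists_forall_ne_zero_of_prod_range_ne_zero {ι : Type*} [Finite ι] {p : ι → Prop}
    {a : ι → ℕ → ℝ} (h : ∀ T, ∃ i, p i ∧ ∏ k ∈ range T, a i k ≠ 0) :
    ∃ i, p i ∧ ∀ k, a i k ≠ 0 := by
  by_contra! hzero
  have : ∀ᶠ T in atTop, ∀ i, p i → ∏ k ∈ range T, a i k = 0 := by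
    refine eventually_all.2 fun i => ?_
    by_cases hi : p i
    · obtain ⟨k, hk⟩ := hzero i hi
      filter_upwards [eventually_gt_atTop k] with T hT _ using prod_eq_zero (mem_range.2 hT) hk
    · exact Eventually.of_forall fun _ hi' => absurd hi' hi
  obtain ⟨T, hT⟩ := this.exists
  obtain ⟨i, hi, hne⟩ := h T
  exact hne (hT i hi)

theorem stmt_3_general (N : ℕ) (hN : 2 ≤ N)
    (L : Matrix (Fin N) (Fin N) ℝ)
    (lam : Fin N → ℝ) (v : Fin N → Fin N → ℝ)
    (hlam0 : ∀ i : Fin N, (i : ℕ) = 0 → lam i = 0)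
    (hlam_pos : ∀ i : Fin N, (i : ℕ) ≠ 0 → 0 < lam i)
    (heig : ∀ i, L.mulVec (v i) = lam i • v i)
    (horth : ∀ i j, v i ⬝ᵥ v j = if i = j then 1 else 0)
    (hv0 : ∀ i : Fin N, (i : ℕ) = 0 → v i = fun _ => (Real.sqrt N)⁻¹)
    (ε : ℕ → ℝ) (hεpos : ∀ k, 0 < ε k) (hεlim : Tendsto ε atTop (nhds 0))
    (hnofin : ∀ T : ℕ, ∃ i : Fin N, (i : ℕ) ≠ 0 ∧
      ∏ k ∈ Finset.range T, (1 - ε k * lam i) ≠ 0) :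
    Tendsto (consProd L ε) atTop
        (nhds ((N : ℝ)⁻¹ • vecMulVec (fun _ => 1) (fun _ => 1))) ↔
      Tendsto (fun n => ∑ k ∈ Finset.range n, ε k) atTop atTop := by
  have : NeZero N := ⟨by omega⟩
  have hlimit : ((N : ℝ)⁻¹ • vecMulVec (fun _ => 1) (fun _ => 1) : Matrix (Fin N) (Fin N) ℝ) =
      ∑ i : Fin N, (if (i : ℕ) = 0 then 1 else 0 : ℝ) • vecMulVec (v i) (v i) := by
    ext a b
    simp [Fin.val_eq_zero_iff, hv0 0 rfl, vecMulVec_apply, ← mul_inv]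
  rw [funext (consProd_eq_sum_smul_vecMulVec heig horth ε), hlimit,
    tendsto_sum_smul_vecMulVec_iff horth]
  constructor
  · intro hcoeff
    obtain ⟨i, hi0, hne⟩ := exists_forall_ne_zero_of_prod_range_ne_zero hnofin
    by_contra hbounded
    have hsummable : Summable ε := by
      by_contra hns
      exact hbounded ((not_summable_iff_tendsto_nat_atTop_of_nonneg fun k => (hεpos k).le).1 hns)
    exact not_tendsto_prod_range_one_sub_zero (hsummable.mul_right (lam i)) hne
      (by simpa [hi0] using hcoeff i)
  · intro hdiv i
    by_cases hi0 : (i : ℕ) = 0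
    · simp [hi0, hlam0 i hi0]
    · simp only [hi0, if_false]
      refine tendsto_prod_range_one_sub_of_eventually_le_one ?_ ?_
      · simpa using (hεlim.mul_const (lam i)).eventually (eventually_le_nhds (by simp))
      · simpa [← sum_mul] using hdiv.atTop_mul_const (hlam_pos i hi0)

theorem stmt_3 (N : ℕ) (hN : 2 ≤ N)
    (L : Matrix (Fin N) (Fin N) ℝ) (hsymm : L.IsSymm) (hpsd : L.PosSemidef)
    (lam : Fin N → ℝ) (v : Fin N → Fin N → ℝ)
    (hlam_mono : Monotone lam)
    (hlam0 : ∀ i : Fin N, (i : ℕ) = 0 → lam i = 0)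
    (hlam_pos : ∀ i : Fin N, (i : ℕ) ≠ 0 → 0 < lam i)
    (heig : ∀ i, L.mulVec (v i) = lam i • v i)
    (horth : ∀ i j, v i ⬝ᵥ v j = if i = j then 1 else 0)
    (hv0 : ∀ i : Fin N, (i : ℕ) = 0 → v i = fun _ => (Real.sqrt N)⁻¹)
    (ε : ℕ → ℝ) (hεpos : ∀ k, 0 < ε k) (hεlim : Tendsto ε atTop (nhds 0))
    (hnofin : ∀ T : ℕ, ∃ i : Fin N, (i : ℕ) ≠ 0 ∧
      ∏ k ∈ Finset.range T, (1 - ε k * lam i) ≠ 0) :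
    Tendsto (consProd L ε) atTop
        (nhds ((N : ℝ)⁻¹ • vecMulVec (fun _ => 1) (fun _ => 1))) ↔
      Tendsto (fun n => ∑ k ∈ Finset.range n, ε k) atTop atTop :=
  stmt_3_general N hN L lam v hlam0 hlam_pos heig horth hv0 ε hεpos hεlim hnofin
end

section
/- (Corollary 1) Let L be an N×N real symmetric positive semidefinite matrix whose kernel is spanned by the all-ones vector 1⃗, and suppose L has exactly K distinct nonzero eigenvalues μ₁, …, μ_K. Then: (a) with the gain sequence ε(k) = 1/μ_{k+1} for k = 0, …, K−1 one has ∏_{k=0}^{K−1}(I − ε(k)L) = (1/N)·1⃗1⃗ᵀ, i.e., average consensus is reached at time K; and (b) K is the minimum such time: for any T < K and any real gains ε(0), …, ε(T−1), ∏_{k=0}^{T−1}(I − ε(k)L) ≠ (1/N)·1⃗1⃗ᵀ. -/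
open Matrix Finset Filter

/-!
In the orthonormal eigenbasis `v` both sides are diagonal: `∏_{k<T} (I - ε(k) L)` multiplies
`v i` by `p (λ i)` with `p x = ∏_{k<T} (1 - ε(k) x)`, while `(1/N) 𝟙𝟙ᵀ` is the orthogonal
projection onto `v 0 = 𝟙/√N`. Hence the product is the averaging matrix iff `p` vanishes at every
nonzero eigenvalue, i.e. iff every `μ j` equals `1/ε(k)` for some `k < T`. The gains
`ε(k) = 1/μ_{k+1}` achieve this with `T = K`, and distinct `μ j` need distinct `k`, so `T ≥ K`.
-/

theorem consProd_mulVec_of_mulVec_eq_smul {N : ℕ} (L : Matrix (Fin N) (Fin N) ℝ) (ε : ℕ → ℝ)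
    {x : Fin N → ℝ} {c : ℝ} (hx : L *ᵥ x = c • x) (T : ℕ) :
    consProd L ε T *ᵥ x = (∏ k ∈ range T, (1 - ε k * c)) • x := by
  induction T with
  | zero => simp [consProd]
  | succ T ih =>
    rw [consProd, ← mulVec_mulVec, ih, mulVec_smul, sub_mulVec, one_mulVec, smul_mulVec, hx,
      prod_range_succ]
    module

theorem prod_one_sub_mul_eq_zero_iff (ε : ℕ → ℝ) (T : ℕ) (c : ℝ) :
    ∏ k ∈ range T, (1 - ε k * c) = 0 ↔ ∃ k < T, ε k * c = 1 := by
  simp [prod_eq_zero_iff, sub_eq_zero, eq_comm (a := (1 : ℝ))]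

theorem card_le_of_forall_exists_mul_eq_one {K T : ℕ} (ε : ℕ → ℝ) {μ : Fin K → ℝ}
    (hμ : Function.Injective μ) (h : ∀ j, ∃ k < T, ε k * μ j = 1) : K ≤ T := by
  have hsub : univ.image μ ⊆ (range T).image fun k => (ε k)⁻¹ := by
    intro x hx
    obtain ⟨j, -, rfl⟩ := mem_image.1 hx
    obtain ⟨k, hk, hkj⟩ := h j
    exact mem_image.2 ⟨k, mem_range.2 hk, (eq_inv_of_mul_eq_one_right hkj).symm⟩
  calc K = (univ.image μ).card := by rw [card_image_of_injective _ hμ, card_univ, Fintype.card_fin]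
    _ ≤ ((range T).image fun k => (ε k)⁻¹).card := card_le_card hsub
    _ ≤ T := card_image_le.trans (card_range T).le

section Orthonormal

variable {ι R : Type*} [Fintype ι] [DecidableEq ι] [CommRing R] {v : ι → ι → R}

theorem Matrix.of_mul_transpose_eq_one (hv : ∀ i j, v i ⬝ᵥ v j = if i = j then 1 else 0) :
    of v * (of v)ᵀ = 1 := by
  ext i j
  simpa [mul_apply, one_apply, dotProduct] using hv i j

theorem Matrix.ext_of_mulVec_orthonormal (hv : ∀ i j, v i ⬝ᵥ v j = if i = j then 1 else 0)
    {A B : Matrix ι ι R} (h : ∀ i, A *ᵥ v i = B *ᵥ v i) : A = B := by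
  have hV : (of v)ᵀ * of v = 1 := mul_eq_one_comm.1 (of_mul_transpose_eq_one hv)
  have hAB : A * (of v)ᵀ = B * (of v)ᵀ := by
    ext x i
    simpa [mul_apply, mulVec, dotProduct, mul_comm] using congrFun (h i) x
  calc A = A * (of v)ᵀ * of v := by rw [Matrix.mul_assoc, hV, Matrix.mul_one]
    _ = B * (of v)ᵀ * of v := by rw [hAB]
    _ = B := by rw [Matrix.mul_assoc, hV, Matrix.mul_one]

end Orthonormal

theorem inv_smul_vecMulVec_one (N : ℕ) :
    (N : ℝ)⁻¹ • vecMulVec (fun _ : Fin N => (1 : ℝ)) (fun _ : Fin N => 1) =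
      vecMulVec (fun _ => (√N)⁻¹) (fun _ => (√N)⁻¹) := by
  ext i j
  simp [vecMulVec, ← mul_inv, Real.mul_self_sqrt (Nat.cast_nonneg N)]

section Eigenbasis

variable {N : ℕ} {L : Matrix (Fin N) (Fin N) ℝ} {lam : Fin N → ℝ} {v : Fin N → Fin N → ℝ}

theorem averaging_mulVec_eigenvector
    (horth : ∀ i j, v i ⬝ᵥ v j = if i = j then 1 else 0)
    (hv0 : ∀ i : Fin N, (i : ℕ) = 0 → v i = fun _ => (√N)⁻¹) (i : Fin N) :
    ((N : ℝ)⁻¹ • vecMulVec (fun _ => 1) (fun _ => 1)) *ᵥ v i = if (i : ℕ) = 0 then v i else 0 := by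
  rw [inv_smul_vecMulVec_one, vecMulVec_mulVec, op_smul_eq_smul]
  by_cases hi : (i : ℕ) = 0
  · simp [hi, ← hv0 i hi, horth]
  · have hi₀ : (⟨0, i.pos⟩ : Fin N) ≠ i := fun h => hi (congrArg Fin.val h).symm
    simp [hi, ← hv0 ⟨0, i.pos⟩ rfl, horth, hi₀]

theorem consProd_eq_averaging_iff (heig : ∀ i, L *ᵥ v i = lam i • v i)
    (horth : ∀ i j, v i ⬝ᵥ v j = if i = j then 1 else 0)
    (hv0 : ∀ i : Fin N, (i : ℕ) = 0 → v i = fun _ => (√N)⁻¹)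
    (hlam0 : ∀ i : Fin N, (i : ℕ) = 0 → lam i = 0) (ε : ℕ → ℝ) (T : ℕ) :
    consProd L ε T = (N : ℝ)⁻¹ • vecMulVec (fun _ => 1) (fun _ => 1) ↔
      ∀ i : Fin N, (i : ℕ) ≠ 0 → ∃ k < T, ε k * lam i = 1 := by
  have hv_ne (i : Fin N) : v i ≠ 0 := fun h => by simpa [h] using horth i i
  have hcomp (i : Fin N) : consProd L ε T *ᵥ v i =
      ((N : ℝ)⁻¹ • vecMulVec (fun _ => 1) (fun _ => 1)) *ᵥ v i ↔
        ((i : ℕ) ≠ 0 → ∃ k < T, ε k * lam i = 1) := by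
    rw [consProd_mulVec_of_mulVec_eq_smul L ε (heig i), averaging_mulVec_eigenvector horth hv0]
    by_cases hi : (i : ℕ) = 0
    · simp [hi, hlam0 i hi]
    · simp only [hi, if_false, ne_eq, not_false_eq_true, forall_const, smul_eq_zero, hv_ne i,
        or_false, prod_one_sub_mul_eq_zero_iff]
  refine ⟨fun h i => (hcomp i).1 (by rw [h]), fun h => ?_⟩
  exact ext_of_mulVec_orthonormal horth fun i => (hcomp i).2 (h i)

end Eigenbasis

theorem stmt_5_general (N : ℕ)
    (L : Matrix (Fin N) (Fin N) ℝ)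
    (lam : Fin N → ℝ) (v : Fin N → Fin N → ℝ)
    (hlam0 : ∀ i : Fin N, (i : ℕ) = 0 → lam i = 0)
    (hlam_pos : ∀ i : Fin N, (i : ℕ) ≠ 0 → 0 < lam i)
    (heig : ∀ i, L.mulVec (v i) = lam i • v i)
    (horth : ∀ i j, v i ⬝ᵥ v j = if i = j then 1 else 0)
    (hv0 : ∀ i : Fin N, (i : ℕ) = 0 → v i = fun _ => (Real.sqrt N)⁻¹)
    -- `μ` enumerates the `K` distinct nonzero eigenvalues of `L`
    (K : ℕ) (μ : Fin K → ℝ) (hμinj : Function.Injective μ)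
    (hμrange : {x : ℝ | ∃ i : Fin N, (i : ℕ) ≠ 0 ∧ lam i = x} = Set.range μ) :
    -- (a) consensus is reached at time `K` with gains `ε(k) = 1/μ_{k+1}`
    (∀ ε : ℕ → ℝ, (∀ k : Fin K, ε (k : ℕ) = (μ k)⁻¹) →
      consProd L ε K = (N : ℝ)⁻¹ • vecMulVec (fun _ => 1) (fun _ => 1)) ∧
    -- (b) `K` is the minimum consensus time
    (∀ T < K, ∀ ε : ℕ → ℝ,
      consProd L ε T ≠ (N : ℝ)⁻¹ • vecMulVec (fun _ => 1) (fun _ => 1)) := by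
  have hconsensus := consProd_eq_averaging_iff heig horth hv0 hlam0
  refine ⟨fun ε hε => (hconsensus ε K).2 fun i hi => ?_, fun T hT ε hP => ?_⟩
  · obtain ⟨j, hj⟩ : lam i ∈ Set.range μ := hμrange ▸ ⟨i, hi, rfl⟩
    exact ⟨j, j.isLt, by rw [hε j, hj, inv_mul_cancel₀ (hlam_pos i hi).ne']⟩
  · have hkill (j : Fin K) : ∃ k < T, ε k * μ j = 1 := by
      obtain ⟨i, hi, hij⟩ : μ j ∈ {x : ℝ | ∃ i : Fin N, (i : ℕ) ≠ 0 ∧ lam i = x} :=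
        hμrange ▸ ⟨j, rfl⟩
      exact hij ▸ (hconsensus ε T).1 hP i hi
    exact hT.not_ge (card_le_of_forall_exists_mul_eq_one ε hμinj hkill)

theorem stmt_5 (N : ℕ) (hN : 2 ≤ N)
    (L : Matrix (Fin N) (Fin N) ℝ) (hsymm : L.IsSymm) (hpsd : L.PosSemidef)
    (lam : Fin N → ℝ) (v : Fin N → Fin N → ℝ)
    (hlam0 : ∀ i : Fin N, (i : ℕ) = 0 → lam i = 0)
    (hlam_pos : ∀ i : Fin N, (i : ℕ) ≠ 0 → 0 < lam i)
    (heig : ∀ i, L.mulVec (v i) = lam i • v i)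
    (horth : ∀ i j, v i ⬝ᵥ v j = if i = j then 1 else 0)
    (hv0 : ∀ i : Fin N, (i : ℕ) = 0 → v i = fun _ => (Real.sqrt N)⁻¹)
    -- `μ` enumerates the `K` distinct nonzero eigenvalues of `L`
    (K : ℕ) (μ : Fin K → ℝ) (hμinj : Function.Injective μ)
    (hμrange : {x : ℝ | ∃ i : Fin N, (i : ℕ) ≠ 0 ∧ lam i = x} = Set.range μ) :
    -- (a) consensus is reached at time `K` with gains `ε(k) = 1/μ_{k+1}`
    (∀ ε : ℕ → ℝ, (∀ k : Fin K, ε (k : ℕ) = (μ k)⁻¹) →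
      consProd L ε K = (N : ℝ)⁻¹ • vecMulVec (fun _ => 1) (fun _ => 1)) ∧
    -- (b) `K` is the minimum consensus time
    (∀ T < K, ∀ ε : ℕ → ℝ,
      consProd L ε T ≠ (N : ℝ)⁻¹ • vecMulVec (fun _ => 1) (fun _ => 1)) :=
  stmt_5_general N L lam v hlam0 hlam_pos heig horth hv0 K μ hμinj hμrange
end

section
/- (Theorem 3, pointwise bound within subintervals) Let 0 < α < β, let M ≥ 1, and set r_k = α + (β−α)(k+1)/(M+1) for k = 0, …, M−1 and h(λ, M) = ∏_{k=0}^{M−1}(1 − λ/r_k). Then for every i ∈ {0, 1, …, M} and every λ ∈ [α + (β−α)i/(M+1), α + (β−α)(i+1)/(M+1)], one has |h(λ, M)| ≤ i!·(M−i)! / ∏_{k=1}^{M}(k + (M+1)α/(β−α)). -/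
/-!
After the affine change of variables `λ = δ (c + t)` with `δ = (β - α)/(M + 1)` and
`c = (M + 1) α / (β - α)`, the nodes become `r_k = δ (c + k + 1)`, the subinterval becomes
`t ∈ [i, i + 1]`, and each factor of `h` becomes `(k + 1 - t)/(c + k + 1)`. The numerators are at
most the distances to the far endpoint, `i - k` for `k < i` and `k + 1 - i` for `k ≥ i`, whose
products are `i!` and `(M - i)!`.
-/

open Finset
open scoped Nat

lemma prod_range_abs_succ_sub_le {i M : ℕ} (hi : i ≤ M) {t : ℝ}
    (ht : t ∈ Set.Icc (i : ℝ) (i + 1)) :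
    ∏ k ∈ range M, |(k + 1 : ℝ) - t| ≤ (i ! * (M - i)! : ℝ) := by
  obtain ⟨hit, hti⟩ := ht
  rw [← prod_range_mul_prod_Ico _ hi]
  have h_left : ∏ k ∈ range i, |(k + 1 : ℝ) - t| ≤ i ! := by
    calc ∏ k ∈ range i, |(k + 1 : ℝ) - t|
        ≤ ∏ k ∈ range i, ((i - k : ℕ) : ℝ) := by
          refine prod_le_prod (fun _ _ ↦ abs_nonneg _) fun k hk ↦ ?_
          have hki : k + 1 ≤ i := mem_range.1 hk
          have : (k + 1 : ℝ) ≤ i := by exact_mod_cast hki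
          rw [abs_of_nonpos (by linarith), Nat.cast_sub (by omega)]
          linarith
      _ = i ! := by
          rw [← Nat.cast_prod, ← Nat.descFactorial_eq_prod_range, Nat.descFactorial_self]
  have h_right : ∏ k ∈ Ico i M, |(k + 1 : ℝ) - t| ≤ (M - i)! := by
    calc ∏ k ∈ Ico i M, |(k + 1 : ℝ) - t|
        ≤ ∏ k ∈ Ico i M, ((k + 1 - i : ℕ) : ℝ) := by
          refine prod_le_prod (fun _ _ ↦ abs_nonneg _) fun k hk ↦ ?_
          have hik : i ≤ k := (mem_Ico.1 hk).1
          have : (i : ℝ) ≤ k := by exact_mod_cast hik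
          rw [abs_of_nonneg (by linarith), Nat.cast_sub (by omega)]
          push_cast
          linarith
      _ = (M - i)! := by
          rw [← Nat.cast_prod, prod_Ico_eq_prod_range, ← prod_range_add_one_eq_factorial]
          congr 1
          exact prod_congr rfl fun k _ ↦ by omega
  exact mul_le_mul h_left h_right (prod_nonneg fun _ _ ↦ abs_nonneg _) (by positivity)

lemma prod_range_add_succ_eq_prod_Icc {R : Type*} [CommMonoid R] (f : ℕ → R) (M : ℕ) :
    ∏ k ∈ range M, f (k + 1) = ∏ k ∈ Icc 1 M, f k := by
  rw [range_eq_Ico, prod_Ico_add', zero_add, Ico_add_one_right_eq_Icc]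

lemma one_sub_mul_div_mul {δ : ℝ} (hδ : δ ≠ 0) (c t s : ℝ) (hs : c + s ≠ 0) :
    1 - δ * (c + t) / (δ * (c + s)) = (s - t) / (c + s) := by
  rw [mul_div_mul_left _ _ hδ, one_sub_div hs]
  ring

theorem stmt_8_general (α β : ℝ) (hα : 0 < α) (hαβ : α < β) (M : ℕ) :
    ∀ i ≤ M, ∀ x ∈ Set.Icc (α + (β - α) * i / (M + 1)) (α + (β - α) * (i + 1) / (M + 1)),
      |∏ k ∈ Finset.range M, (1 - x / (α + (β - α) * (k + 1) / (M + 1)))| ≤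
        ((Nat.factorial i : ℝ) * (Nat.factorial (M - i) : ℝ)) /
          ∏ k ∈ Finset.Icc 1 M, ((k : ℝ) + (M + 1) * α / (β - α)) := by
  intro i hi x ⟨hx₁, hx₂⟩
  set δ := (β - α) / (M + 1)
  set c := (M + 1) * α / (β - α)
  have hβα : 0 < β - α := sub_pos.2 hαβ
  have hδ : 0 < δ := by positivity
  have hc : 0 < c := by positivity
  have h_node : ∀ s : ℝ, α + (β - α) * s / (M + 1) = δ * (c + s) := fun s ↦ by
    simp only [δ, c]; field_simp
  set t := x / δ - c
  have hx : x = δ * (c + t) := by simp only [t]; field_simp; ring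
  have ht : t ∈ Set.Icc (i : ℝ) (i + 1) := by
    rw [h_node, hx] at hx₁ hx₂
    exact ⟨by simpa using le_of_mul_le_mul_left hx₁ hδ,
      by simpa using le_of_mul_le_mul_left hx₂ hδ⟩
  have h_factor : ∀ k : ℕ, 1 - x / (α + (β - α) * (k + 1) / (M + 1)) =
      ((k + 1 : ℝ) - t) / (c + (k + 1)) := fun k ↦ by
    rw [hx, h_node]
    exact one_sub_mul_div_mul hδ.ne' _ _ _ (by positivity)
  simp_rw [h_factor, prod_div_distrib, abs_div, abs_prod]
  have h_denom : ∏ k ∈ range M, |c + (k + 1 : ℝ)| = ∏ k ∈ Icc 1 M, ((k : ℝ) + c) := by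
    rw [← prod_range_add_succ_eq_prod_Icc (fun k : ℕ ↦ (k : ℝ) + c)]
    refine prod_congr rfl fun k _ ↦ ?_
    rw [abs_of_pos (by positivity)]
    push_cast
    ring
  rw [h_denom]
  exact div_le_div_of_nonneg_right (prod_range_abs_succ_sub_le hi ht) (by positivity)

theorem stmt_8 (α β : ℝ) (hα : 0 < α) (hαβ : α < β) (M : ℕ) (hM : 1 ≤ M) :
    ∀ i ≤ M, ∀ x ∈ Set.Icc (α + (β - α) * i / (M + 1)) (α + (β - α) * (i + 1) / (M + 1)),
      |∏ k ∈ Finset.range M, (1 - x / (α + (β - α) * (k + 1) / (M + 1)))| ≤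
        ((Nat.factorial i : ℝ) * (Nat.factorial (M - i) : ℝ)) /
          ∏ k ∈ Finset.Icc 1 M, ((k : ℝ) + (M + 1) * α / (β - α)) :=
  stmt_8_general α β hα hαβ M
end

section
/- (Remark 7) Let 0 < α < β and M ≥ 1, and let γ_M = M! / ∏_{k=1}^{M}(k + (M+1)α/(β−α)). Then γ_M = ∏_{k=1}^{M} (β−α)/(β + ((M+1−k)/k)·α), and γ_M ≤ ((β−α)/(β+α))^M, with equality if and only if M = 1. In particular, for M ≥ 2, γ_M < ((β−α)/(β+α))^M, i.e., the M-periodic Lagrange-interpolation design is strictly faster (in worst-case bound) than M steps of the best constant gain ε ≡ 2/(α+β). -/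
open Finset

lemma term_le_aux (a b c : ℝ) (ha : 1 ≤ a) (hb : 1 ≤ b) (hc : 0 < c) :
    a / (a + c) * (b / (b + c)) ≤ ((a + b) / (a + b + 2 * c)) ^ 2 := by
  have h1 : 0 < a + c := by linarith
  have h2 : 0 < b + c := by linarith
  have h3 : 0 < a + b + 2 * c := by linarith
  rw [div_mul_div_comm, div_pow, div_le_div_iff₀ (by positivity) (by positivity)]
  nlinarith [mul_nonneg (mul_nonneg hc.le (by linarith : (0:ℝ) ≤ a + b + c)) (sq_nonneg (a - b))]

lemma term_lt_aux (a b c : ℝ) (ha : 1 ≤ a) (hb : 1 ≤ b) (hc : 0 < c) (hab : a ≠ b) :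
    a / (a + c) * (b / (b + c)) < ((a + b) / (a + b + 2 * c)) ^ 2 := by
  have h1 : 0 < a + c := by linarith
  have h2 : 0 < b + c := by linarith
  have h3 : 0 < a + b + 2 * c := by linarith
  have h4 : 0 < (a - b) ^ 2 := by
    have := sub_ne_zero.mpr hab
    positivity
  rw [div_mul_div_comm, div_pow, div_lt_div_iff₀ (by positivity) (by positivity)]
  nlinarith [mul_pos (mul_pos hc (by linarith : (0:ℝ) < a + b + c)) h4]

theorem stmt_10 (α β : ℝ) (hα : 0 < α) (hαβ : α < β) (M : ℕ) (hM : 1 ≤ M) :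
    (Nat.factorial M : ℝ) / (∏ k ∈ Finset.Icc 1 M, ((k : ℝ) + (M + 1) * α / (β - α))) =
      (∏ k ∈ Finset.Icc 1 M, (β - α) / (β + ((M + 1 - k : ℕ) : ℝ) / (k : ℝ) * α)) ∧
    (Nat.factorial M : ℝ) / (∏ k ∈ Finset.Icc 1 M, ((k : ℝ) + (M + 1) * α / (β - α))) ≤
      ((β - α) / (β + α)) ^ M ∧
    ((Nat.factorial M : ℝ) / (∏ k ∈ Finset.Icc 1 M, ((k : ℝ) + (M + 1) * α / (β - α))) =
        ((β - α) / (β + α)) ^ M ↔ M = 1) := by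
  have hd : 0 < β - α := by linarith
  have hβ : 0 < β := by linarith
  set c : ℝ := ((M : ℝ) + 1) * α / (β - α) with hc_def
  have hc : 0 < c := by positivity
  set g : ℕ → ℝ := fun i => ((i:ℝ) + 1) / ((i:ℝ) + 1 + c) with hg_def
  set P : ℝ := ∏ i ∈ range M, g i with hP_def
  set Q : ℝ := ((M:ℝ) + 1) / ((M:ℝ) + 1 + 2 * c) with hQ_def
  have hQpos : 0 < Q := by rw [hQ_def]; positivity
  have hgpos : ∀ i, 0 < g i := by
    intro i; simp only [hg_def]; positivity
  have hPpos : 0 < P := Finset.prod_pos fun i _ => hgpos i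
  -- LHS equals P
  have hLHS : (Nat.factorial M : ℝ) / (∏ k ∈ Finset.Icc 1 M, ((k : ℝ) + c)) = P := by
    have hfact : (Nat.factorial M : ℝ) = ∏ i ∈ range M, ((i:ℝ) + 1) := by
      rw [← Finset.prod_range_add_one_eq_factorial M]
      push_cast
      rfl
    have hden : (∏ k ∈ Finset.Icc 1 M, ((k : ℝ) + c)) =
        ∏ i ∈ range M, ((i:ℝ) + 1 + c) := by
      rw [← Finset.Ico_add_one_right_eq_Icc, Finset.prod_Ico_eq_prod_range]
      try simp only [Nat.add_sub_cancel]
      apply Finset.prod_congr rfl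
      intro i _
      push_cast
      ring
    rw [hfact, hden, ← Finset.prod_div_distrib, hP_def]
  -- statement RHS product equals P
  have hRHS : (∏ k ∈ Finset.Icc 1 M, (β - α) / (β + ((M + 1 - k : ℕ) : ℝ) / (k : ℝ) * α)) = P := by
    rw [hP_def, ← Finset.Ico_add_one_right_eq_Icc, Finset.prod_Ico_eq_prod_range]
    try simp only [Nat.add_sub_cancel]
    apply Finset.prod_congr rfl
    intro i hi
    rw [Finset.mem_range] at hi
    have h1M : 1 + i ≤ M + 1 := by omega
    have hcast : ((M + 1 - (1 + i) : ℕ) : ℝ) = (M:ℝ) - i := by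
      rw [Nat.cast_sub h1M]; push_cast; ring
    have hkpos : (0:ℝ) < (1 + i : ℕ) := by positivity
    have hMi : (0:ℝ) ≤ (M:ℝ) - i := by
      have : (i:ℝ) ≤ M := by exact_mod_cast hi.le
      linarith
    have hdenpos : 0 < β + ((M:ℝ) - i) / ((1 + i : ℕ) : ℝ) * α := by
      have : 0 ≤ ((M:ℝ) - i) / ((1 + i : ℕ) : ℝ) * α :=
        mul_nonneg (div_nonneg hMi hkpos.le) hα.le
      linarith
    rw [hcast, hg_def]
    have hgoal : ((1 + i : ℕ) : ℝ) = (i:ℝ) + 1 := by push_cast; ring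
    rw [hgoal] at hdenpos ⊢
    rw [div_eq_div_iff (by linarith) (by positivity), hc_def]
    field_simp
    ring
  -- (β-α)/(β+α) = Q
  have hQeq : (β - α) / (β + α) = Q := by
    rw [hQ_def, hc_def, div_eq_div_iff (by linarith) (by positivity)]
    field_simp
    ring
  -- termwise data
  have hterm : ∀ i ∈ range M, g i * g (M - 1 - i) =
      ((i:ℝ) + 1) / (((i:ℝ) + 1) + c) * ((((M:ℝ) - i)) / (((M:ℝ) - i) + c)) := by
    intro i hi
    rw [Finset.mem_range] at hi
    have hcast : ((M - 1 - i : ℕ) : ℝ) = (M:ℝ) - 1 - i := by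
      rw [Nat.sub_sub, Nat.cast_sub (by omega : 1 + i ≤ M)]
      push_cast; ring
    simp only [hg_def]
    rw [hcast]
    ring_nf
  have hab : ∀ i : ℕ, i < M → (1 ≤ (i:ℝ) + 1 ∧ 1 ≤ (M:ℝ) - i) := by
    intro i hi
    constructor
    · have : (0:ℝ) ≤ (i:ℝ) := Nat.cast_nonneg i
      linarith
    · have : (i:ℝ) + 1 ≤ M := by exact_mod_cast hi
      linarith
  have hsum : ∀ i : ℕ, ((i:ℝ) + 1) + ((M:ℝ) - i) = (M:ℝ) + 1 := fun i => by ring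
  have hsq : P * P = ∏ i ∈ range M, (g i * g (M - 1 - i)) := by
    rw [Finset.prod_mul_distrib, Finset.prod_range_reflect]
  have hQQ : (Q ^ 2) ^ M = Q ^ M * Q ^ M := by
    rw [← pow_mul, two_mul, pow_add]
  -- main inequality on squares
  have key_le : P * P ≤ (Q ^ 2) ^ M := by
    rw [hsq]
    calc ∏ i ∈ range M, (g i * g (M - 1 - i)) ≤ ∏ _i ∈ range M, Q ^ 2 := by
          apply Finset.prod_le_prod
          · intro i _; exact (mul_pos (hgpos i) (hgpos _)).le
          · intro i hi
            rw [hterm i hi]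
            have hi' := Finset.mem_range.mp hi
            have h := term_le_aux ((i:ℝ) + 1) ((M:ℝ) - i) c (hab i hi').1 (hab i hi').2 hc
            rw [hsum i] at h; exact h
      _ = (Q ^ 2) ^ M := by rw [Finset.prod_const, Finset.card_range]
  have hPQ : P ≤ Q ^ M := by
    rw [hQQ] at key_le
    nlinarith [pow_pos hQpos M, hPpos]
  -- strict inequality for M ≥ 2
  have hstrict : 2 ≤ M → P < Q ^ M := by
    intro h2M
    have key_lt : P * P < (Q ^ 2) ^ M := by
      rw [hsq]
      have : ∏ i ∈ range M, (g i * g (M - 1 - i)) < ∏ _i ∈ range M, Q ^ 2 := by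
        apply Finset.prod_lt_prod
        · intro i _; exact mul_pos (hgpos i) (hgpos _)
        · intro i hi
          rw [hterm i hi]
          have hi' := Finset.mem_range.mp hi
          have h := term_le_aux ((i:ℝ) + 1) ((M:ℝ) - i) c (hab i hi').1 (hab i hi').2 hc
          rw [hsum i] at h; exact h
        · refine ⟨0, Finset.mem_range.mpr (by omega), ?_⟩
          rw [hterm 0 (Finset.mem_range.mpr (by omega))]
          simp only [Nat.cast_zero, zero_add, sub_zero]
          have hM1 : (1:ℝ) ≤ (M:ℝ) := by exact_mod_cast hM
          have hM2 : (2:ℝ) ≤ (M:ℝ) := by exact_mod_cast h2M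
          have hne : (1:ℝ) ≠ (M:ℝ) := by intro h; linarith
          have h := term_lt_aux 1 ((M:ℝ)) c le_rfl hM1 hc hne
          have he : (1:ℝ) + (M:ℝ) = (M:ℝ) + 1 := by ring
          rw [he] at h
          exact h
      calc ∏ i ∈ range M, (g i * g (M - 1 - i)) < ∏ _i ∈ range M, Q ^ 2 := this
        _ = (Q ^ 2) ^ M := by rw [Finset.prod_const, Finset.card_range]
    rw [hQQ] at key_lt
    nlinarith [pow_pos hQpos M, hPpos]
  refine ⟨hLHS.trans hRHS.symm, ?_, ?_⟩
  · rw [hLHS, hQeq]; exact hPQ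
  · constructor
    · intro h
      by_contra hne
      have h2M : 2 ≤ M := by omega
      rw [hLHS, hQeq] at h
      exact absurd h (ne_of_lt (hstrict h2M))
    · intro h
      subst h
      rw [hLHS, hQeq, hP_def]
      rw [Finset.prod_range_one, hg_def, hQ_def]
      push_cast
      rw [pow_one]
      rw [div_eq_div_iff (by positivity) (by positivity)]
      ring
end

section
/- (Theorem 4, uniqueness) Let 0 < α < β and M ≥ 1 and let g_M(λ) = T_M((2λ − (β+α))/(β−α)) where T_M is the M-th Chebyshev polynomial of the first kind. If p is a real polynomial of degree at most M with p(0) = 1 and max_{λ ∈ [α, β]} |p(λ)| = 1/|g_M(0)|, then p(λ) = g_M(λ)/g_M(0) for all λ. -/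
/-!
After the affine substitution `λ = ((β - α) y + (β + α)) / 2`, the polynomial
`P = g_M(0) · p(λ(y))` is bounded by `1` on `[-1, 1]` and agrees with `T_M` at
`y₀ = -(β + α) / (β - α) < -1`. Writing `P(y₀)` by Lagrange interpolation at the extremal
nodes `cos (kπ/M)` of `T_M`, the weight of the `k`-th node has sign `(-1)^(M+k)`, while `T_M`
takes the value `(-1)^k` there. So `(-1)^M T_M(y₀)` is the largest value `(-1)^M P(y₀)` can
take, and it is attained only if `P` agrees with `T_M` at all `M + 1` nodes, i.e. `P = T_M`.
-/

open Polynomial Real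

namespace Lagrange

variable {F ι : Type*} [Field F] [DecidableEq ι]

lemma eval_basis (s : Finset ι) (v : ι → F) (i : ι) (x : F) :
    (Lagrange.basis s v i).eval x =
      (∏ j ∈ s.erase i, (v i - v j))⁻¹ * ∏ j ∈ s.erase i, (x - v j) := by
  simp only [Lagrange.basis, basisDivisor, eval_prod, eval_mul, eval_C, eval_sub, eval_X,
    Finset.prod_mul_distrib, Finset.prod_inv_distrib]

end Lagrange

namespace Polynomial.Chebyshev

lemma sumNodes_mul_left (n : ℕ) (a : ℝ) (c : ℕ → ℝ) (P : ℝ[X]) :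
    sumNodes n (fun i => a * c i) P = a * sumNodes n c P := by
  simp only [sumNodes, Finset.mul_sum]
  exact Finset.sum_congr rfl fun _ _ => by ring

lemma sumNodes_eval_basis_node {n : ℕ} {P : ℝ[X]} (hP : P.degree ≤ n) (x : ℝ) :
    sumNodes n (fun i => (Lagrange.basis (Finset.range (n + 1)) (node n ·) i).eval x) P =
      P.eval x := by
  have hcard : P.degree < (Finset.range (n + 1)).card := by
    rw [Finset.card_range]
    exact hP.trans_lt (WithBot.coe_lt_coe.mpr n.lt_succ_self)
  conv_rhs => rw [Lagrange.eq_interpolate (strictAntiOn_node n).injOn hcard]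
  simp [sumNodes, Lagrange.interpolate_apply, eval_finsetSum, Nat.range_succ_eq_Iic]

lemma zero_lt_negOnePow_mul_eval_basis_node {n i : ℕ} (hi : i ≤ n) {x : ℝ} (hx : x < -1) :
    0 < (-1) ^ i * ((-1) ^ n * (Lagrange.basis (Finset.range (n + 1)) (node n ·) i).eval x) := by
  have hden := zero_lt_prod_node_sub_node hi
  have hnum : 0 < (-1) ^ n * ∏ j ∈ (Finset.range (n + 1)).erase i, (x - node n j) := by
    have hcard : ((Finset.range (n + 1)).erase i).card = n := by
      rw [Finset.card_erase_of_mem (Finset.mem_range_succ_iff.mpr hi), Finset.card_range,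
        Nat.succ_sub_one]
    have hflip : ∏ j ∈ (Finset.range (n + 1)).erase i, (x - node n j) =
        (-1) ^ n * ∏ j ∈ (Finset.range (n + 1)).erase i, (node n j - x) := by
      calc _ = ∏ j ∈ (Finset.range (n + 1)).erase i, -(node n j - x) := by simp only [neg_sub]
        _ = _ := by rw [Finset.prod_neg, hcard]
    rw [hflip, ← mul_assoc, ← mul_pow, neg_one_mul, neg_neg, one_pow, one_mul]
    exact Finset.prod_pos fun j _ => by linarith [(node_mem_Icc (n := n) (i := j)).1]
  refine (mul_pos (inv_pos.mpr hden) hnum).trans_eq ?_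
  rw [Lagrange.eval_basis, mul_inv, ← inv_pow, inv_neg_one]
  ring

theorem eval_eq_eval_T_real_iff_of_forall_abs_le_one {n : ℕ} {P : ℝ[X]} {x : ℝ} (hx : x < -1)
    (hPdeg : P.degree ≤ n) (hPbnd : ∀ y ∈ Set.Icc (-1) 1, |P.eval y| ≤ 1) :
    P.eval x = (T ℝ n).eval x ↔ P = T ℝ n := by
  rw [← sumNodes_eq_sumNodes_T_iff (fun i hi => zero_lt_negOnePow_mul_eval_basis_node hi hx)
    hPdeg hPbnd, sumNodes_mul_left, sumNodes_mul_left, sumNodes_eval_basis_node hPdeg,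
    sumNodes_eval_basis_node (by simp)]
  exact (mul_right_inj' (pow_ne_zero n (by norm_num))).symm

end Polynomial.Chebyshev

theorem stmt_16_general (α β : ℝ) (hα : 0 < α) (hαβ : α < β) (M : ℕ)
    (p : Polynomial ℝ) (hdeg : p.natDegree ≤ M) (hp0 : p.eval 0 = 1)
    (hbound : ∀ x ∈ Set.Icc α β, |p.eval x| ≤
      1 / |(Polynomial.Chebyshev.T ℝ (M : ℤ)).eval (-(β + α) / (β - α))|) :
    ∀ x : ℝ, p.eval x =
      (Polynomial.Chebyshev.T ℝ (M : ℤ)).eval ((2 * x - (β + α)) / (β - α)) /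
        (Polynomial.Chebyshev.T ℝ (M : ℤ)).eval (-(β + α) / (β - α)) := by
  have hβα : 0 < β - α := sub_pos.mpr hαβ
  set y₀ := -(β + α) / (β - α)
  set g₀ := (Chebyshev.T ℝ M).eval y₀
  have hy₀ : y₀ < -1 := by rw [div_lt_iff₀ hβα]; linarith
  have hg₀ : g₀ ≠ 0 := by
    have hg₀_abs : 1 ≤ |g₀| :=
      Chebyshev.one_le_abs_eval_T_real M (by rw [abs_of_neg (by linarith)]; linarith)
    exact abs_pos.mp (by linarith)
  set ℓ : ℝ[X] := C ((β - α) / 2) * X + C ((β + α) / 2)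
  have hℓ (y : ℝ) : ℓ.eval y = ((β - α) * y + (β + α)) / 2 := by
    simp only [ℓ, eval_add, eval_mul, eval_C, eval_X]; ring
  set P := C g₀ * p.comp ℓ
  have hPdeg : P.degree ≤ M := by
    refine degree_le_of_natDegree_le ((natDegree_C_mul_le _ _).trans (natDegree_comp_le.trans ?_))
    have hℓdeg : ℓ.natDegree ≤ 1 := natDegree_linear_le
    simpa using Nat.mul_le_mul hdeg hℓdeg
  have hPbnd : ∀ y ∈ Set.Icc (-1 : ℝ) 1, |P.eval y| ≤ 1 := by
    intro y ⟨hy₁, hy₂⟩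
    have hmem : ℓ.eval y ∈ Set.Icc α β := by
      rw [hℓ]; constructor <;> nlinarith
    have hpℓ := hbound _ hmem
    rw [le_div_iff₀ (abs_pos.mpr hg₀)] at hpℓ
    simpa [P, abs_mul, mul_comm] using hpℓ
  have hPy₀ : P.eval y₀ = (Chebyshev.T ℝ M).eval y₀ := by
    have hℓy₀ : ℓ.eval y₀ = 0 := by rw [hℓ, mul_div_cancel₀ _ hβα.ne']; ring
    simp [P, hℓy₀, hp0, g₀]
  have hP := (Chebyshev.eval_eq_eval_T_real_iff_of_forall_abs_le_one hy₀ hPdeg hPbnd).mp hPy₀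
  intro x
  have hx : ℓ.eval ((2 * x - (β + α)) / (β - α)) = x := by rw [hℓ]; field_simp; ring
  rw [← hP, eq_div_iff hg₀, eval_mul, eval_C, eval_comp, hx, mul_comm]

theorem stmt_16 (α β : ℝ) (hα : 0 < α) (hαβ : α < β) (M : ℕ) (hM : 1 ≤ M)
    (p : Polynomial ℝ) (hdeg : p.natDegree ≤ M) (hp0 : p.eval 0 = 1)
    (hbound : ∀ x ∈ Set.Icc α β, |p.eval x| ≤
      1 / |(Polynomial.Chebyshev.T ℝ (M : ℤ)).eval (-(β + α) / (β - α))|)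
    (hattain : ∃ x ∈ Set.Icc α β, |p.eval x| =
      1 / |(Polynomial.Chebyshev.T ℝ (M : ℤ)).eval (-(β + α) / (β - α))|) :
    ∀ x : ℝ, p.eval x =
      (Polynomial.Chebyshev.T ℝ (M : ℤ)).eval ((2 * x - (β + α)) / (β - α)) /
        (Polynomial.Chebyshev.T ℝ (M : ℤ)).eval (-(β + α) / (β - α)) :=
  stmt_16_general α β hα hαβ M p hdeg hp0 hbound
end

section
/- (Theorem 6, asymptotic optimal worst-case rate) Let 0 < α < β and let g_M(0) = T_M(−(β+α)/(β−α)) where T_M is the M-th Chebyshev polynomial of the first kind, and let γ*_M = 1/|g_M(0)| be the optimal worst-case per-period convergence rate over [α, β]. Then lim_{M→∞} |g_M(0)|^{1/M} = (√(β/α) + 1)/(√(β/α) − 1), and consequently lim_{M→∞} (γ*_M)^{1/M} = (√(β/α) − 1)/(√(β/α) + 1); i.e., the optimal worst-case asymptotic convergence rate over all time-varying gain sequences for graphs with nonzero Laplacian spectrum in [α, β] equals (√(β/α) − 1)/(√(β/α) + 1). -/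
/-!
Writing the evaluation point as `x = (z + z⁻¹) / 2`, one has `T_M(x) = (z ^ M + z⁻¹ ^ M) / 2`, so for
`|z| = r > 1` the value `|T_M(x)|` lies between `r ^ M / 2` and `r ^ M`, and its `M`-th root tends
to `r`. For `x = -(β + α) / (β - α)` the root of `z + z⁻¹ = 2x` with `|z| > 1` has
`|z| = (√(β/α) + 1) / (√(β/α) - 1)`.
-/

open Polynomial Filter

theorem Polynomial.Chebyshev.T_eval_half_add_inv {K : Type*} [Field K] [NeZero (2 : K)]
    {z : K} (hz : z ≠ 0) (n : ℕ) :
    (T K n).eval ((z + z⁻¹) / 2) = (z ^ n + z⁻¹ ^ n) / 2 := by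
  let _ : Invertible (2 : K) := invertibleOfNonzero two_ne_zero
  rw [chebyshev_T_eq_dickson_one_one, eval_mul, eval_comp, eval_mul, eval_ofNat, eval_X,
    mul_div_cancel₀ _ two_ne_zero, dickson_one_one_eval_add_inv _ _ (mul_inv_cancel₀ hz), eval_C,
    invOf_eq_inv, inv_mul_eq_div]

theorem Polynomial.Chebyshev.abs_T_eval_abs (n : ℤ) (x : ℝ) :
    |(T ℝ n).eval (|x|)| = |(T ℝ n).eval x| := by
  rcases abs_choice x with h | h <;> rw [h]
  rw [T_eval_neg, abs_mul]
  simp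

theorem tendsto_mul_pow_rpow_inv {c r : ℝ} (hc : 0 < c) (hr : 0 ≤ r) :
    Tendsto (fun M : ℕ => (c * r ^ M) ^ ((M : ℝ)⁻¹)) atTop (nhds r) := by
  have hc' : Tendsto (fun M : ℕ => c ^ ((M : ℝ)⁻¹)) atTop (nhds 1) := by
    simpa [Function.comp_def] using ((Real.continuousAt_const_rpow hc.ne').tendsto.comp
      (tendsto_inv_atTop_zero.comp tendsto_natCast_atTop_atTop))
  refine (by simpa using hc'.mul_const r : Tendsto _ atTop (nhds r)).congr' ?_
  filter_upwards [eventually_ne_atTop 0] with M hM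
  rw [Real.mul_rpow hc.le (by positivity), ← Real.rpow_natCast,
    ← Real.rpow_mul hr, mul_inv_cancel₀ (Nat.cast_ne_zero.2 hM), Real.rpow_one]

theorem tendsto_rpow_inv_of_le_of_le {a : ℕ → ℝ} {c C r : ℝ} (hc : 0 < c) (hC : 0 < C)
    (hr : 0 ≤ r) (hlow : ∀ M, c * r ^ M ≤ a M) (hup : ∀ M, a M ≤ C * r ^ M) :
    Tendsto (fun M : ℕ => a M ^ ((M : ℝ)⁻¹)) atTop (nhds r) :=
  tendsto_of_tendsto_of_tendsto_of_le_of_le (tendsto_mul_pow_rpow_inv hc hr)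
    (tendsto_mul_pow_rpow_inv hC hr)
    (fun M => Real.rpow_le_rpow (by positivity) (hlow M) (by positivity))
    (fun M => Real.rpow_le_rpow ((by positivity : 0 ≤ c * r ^ M).trans (hlow M)) (hup M)
      (by positivity))

theorem tendsto_half_pow_add_inv_pow_rpow_inv {r : ℝ} (hr : 1 ≤ r) :
    Tendsto (fun M : ℕ => ((r ^ M + r⁻¹ ^ M) / 2) ^ ((M : ℝ)⁻¹)) atTop (nhds r) := by
  refine tendsto_rpow_inv_of_le_of_le (c := 1 / 2) (C := 1) (by norm_num) one_pos
    (by linarith) (fun M => ?_) (fun M => ?_)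
  · have : 0 ≤ r⁻¹ ^ M := by positivity
    linarith
  · have : r⁻¹ ^ M ≤ r ^ M :=
      pow_le_pow_left₀ (by positivity) ((inv_le_one_of_one_le₀ hr).trans hr) M
    linarith

open Polynomial.Chebyshev in
theorem tendsto_abs_T_eval_rpow_inv {x r : ℝ} (hr : 1 ≤ r) (hx : |x| = (r + r⁻¹) / 2) :
    Tendsto (fun M : ℕ => |(T ℝ M).eval x| ^ ((M : ℝ)⁻¹)) atTop (nhds r) := by
  refine (tendsto_half_pow_add_inv_pow_rpow_inv hr).congr fun M => ?_
  rw [← abs_T_eval_abs, hx, T_eval_half_add_inv (by positivity), abs_of_nonneg (by positivity)]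

theorem stmt_19 (α β : ℝ) (hα : 0 < α) (hαβ : α < β) :
    Tendsto (fun M : ℕ =>
        |(Polynomial.Chebyshev.T ℝ (M : ℤ)).eval (-(β + α) / (β - α))| ^ ((M : ℝ)⁻¹))
      atTop
      (nhds ((Real.sqrt (β / α) + 1) / (Real.sqrt (β / α) - 1))) ∧
    Tendsto (fun M : ℕ =>
        (1 / |(Polynomial.Chebyshev.T ℝ (M : ℤ)).eval (-(β + α) / (β - α))|) ^ ((M : ℝ)⁻¹))
      atTop
      (nhds ((Real.sqrt (β / α) - 1) / (Real.sqrt (β / α) + 1))) := by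
  set s := √(β / α)
  have hs : 1 < s := Real.lt_sqrt_of_sq_lt (by rw [one_pow, one_lt_div hα]; exact hαβ)
  have hs_sq : α * s ^ 2 = β := by
    rw [Real.sq_sqrt (div_pos (hα.trans hαβ) hα).le, mul_div_cancel₀ _ hα.ne']
  have hr : 1 < (s + 1) / (s - 1) := (one_lt_div (by linarith)).2 (by linarith)
  have hx : |-(β + α) / (β - α)| = ((s + 1) / (s - 1) + ((s + 1) / (s - 1))⁻¹) / 2 := by
    rw [abs_div, abs_neg, abs_of_pos (by linarith), abs_of_pos (by linarith), inv_div,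
      ← hs_sq]
    have h1 : s - 1 ≠ 0 := by linarith
    have h2 : s + 1 ≠ 0 := by linarith
    have h3 : s ^ 2 - 1 ≠ 0 := by nlinarith
    field_simp
    ring
  have hlim := tendsto_abs_T_eval_rpow_inv hr.le hx
  refine ⟨hlim, ?_⟩
  rw [← inv_div (s + 1)]
  refine (hlim.inv₀ (by linarith)).congr fun M => ?_
  rw [one_div, Real.inv_rpow (abs_nonneg _)]
end
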